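/- Let a(λ) = c Σ_{ijk} area(P_i P_j P_k) λ_i λ_j λ_k (c > 0, P_i vertices of a convex polygon in cyclic order) restricted to the simplex, let λ^M be a point where all partial derivatives of a are equal (local maximum), and fix an index i. Define λ^D by λ^D_i = 0, λ^D_{i+1} = λ^M_i + λ^M_{i+1}, λ^D_j = λ^M_j otherwise. Then a(λ^D) − a(λ^M) = −c·3!·(λ^M_i)² Σ_j λ^M_j area(P_i P_{i+1} P_j). -/

import Mathlib

/-!
Write `a(λ) = c B(λ, λ, λ)` for the trilinear form `B(x, y, z) = Σ T_{abc} x_a y_b z_c` with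
`T_{abc} = area(P_a P_b P_c)`, which is symmetric and vanishes when two indices coincide.
With `t = λ^M_i` and `w = e_{i+1} − e_i` we have `λ^D = λ^M + t w`, and
`B(λ^D, λ^D, λ^D) − B(λ^M, λ^M, λ^M) = 3t B(w, λ^M, λ^M) + 3t² B(w, w, λ^M) + t³ B(w, w, w)`.
The first term is a difference of two partial derivatives of `a`, zero at `λ^M`; the last one
vanishes because every triple of indices drawn from `{i, i+1}` repeats one; and
`B(w, w, x) = −2 Σ_k T_{i,i+1,k} x_k`.
-/

open Finset

/-- 2D cross product. -/
def cross2 (u v : ℝ × ℝ) : ℝ := u.1 * v.2 - u.2 * v.1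

/-- Unsigned area of a triangle in the plane. -/
noncomputable def triArea (A B C : ℝ × ℝ) : ℝ := |cross2 (B - A) (C - A)| / 2

/-- The cubic form `a(λ) = c Σ_{i,j,k} area(P_i P_j P_k) λ_i λ_j λ_k`. -/
noncomputable def aForm {n : ℕ} (c : ℝ) (P : Fin n → ℝ × ℝ) (lam : Fin n → ℝ) : ℝ :=
  c * ∑ i, ∑ j, ∑ k, triArea (P i) (P j) (P k) * (lam i * lam j * lam k)

section TripleSum

variable {ι : Type*} [Fintype ι] {T : ι → ι → ι → ℝ}

def tripleSum (T : ι → ι → ι → ℝ) (x y z : ι → ℝ) : ℝ :=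
  ∑ a, ∑ b, ∑ c, T a b c * (x a * y b * z c)

lemma tripleSum_add_smul_left (x w y z : ι → ℝ) (t : ℝ) :
    tripleSum T (x + t • w) y z = tripleSum T x y z + t * tripleSum T w y z := by
  simp only [tripleSum, mul_sum, ← sum_add_distrib]
  refine sum_congr rfl fun a _ => sum_congr rfl fun b _ => sum_congr rfl fun c _ => ?_
  simp only [Pi.add_apply, Pi.smul_apply, smul_eq_mul]
  ring

lemma tripleSum_comm12 (h12 : ∀ a b c, T a b c = T b a c) (x y z : ι → ℝ) :
    tripleSum T x y z = tripleSum T y x z := by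
  rw [tripleSum, sum_comm]
  refine sum_congr rfl fun a _ => sum_congr rfl fun b _ => sum_congr rfl fun c _ => ?_
  rw [h12]
  ring

lemma tripleSum_comm23 (h23 : ∀ a b c, T a b c = T a c b) (x y z : ι → ℝ) :
    tripleSum T x y z = tripleSum T x z y := by
  refine sum_congr rfl fun a _ => ?_
  rw [sum_comm]
  refine sum_congr rfl fun b _ => sum_congr rfl fun c _ => ?_
  rw [h23]
  ring

lemma tripleSum_diag_add_smul (h12 : ∀ a b c, T a b c = T b a c)
    (h23 : ∀ a b c, T a b c = T a c b) (x w : ι → ℝ) (t : ℝ) :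
    tripleSum T (x + t • w) (x + t • w) (x + t • w) = tripleSum T x x x +
      3 * t * tripleSum T w x x + 3 * t ^ 2 * tripleSum T w w x + t ^ 3 * tripleSum T w w w := by
  have comm12 := tripleSum_comm12 h12
  have comm23 := tripleSum_comm23 h23
  have mid : ∀ y z, tripleSum T y (x + t • w) z = tripleSum T y x z + t * tripleSum T y w z := by
    intro y z
    rw [comm12, tripleSum_add_smul_left, comm12 x, comm12 w]
  have right : ∀ y z, tripleSum T y z (x + t • w) = tripleSum T y z x + t * tripleSum T y z w := by
    intro y z
    rw [comm23, mid, comm23 _ x, comm23 _ w]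
  simp only [tripleSum_add_smul_left, mid, right]
  rw [comm23 x x w, comm12 x w, comm12 x w w, comm23 w x w]
  ring

variable [DecidableEq ι]

lemma tripleSum_single_sub_single_left (i j : ι) (y z : ι → ℝ) :
    tripleSum T (Pi.single j 1 - Pi.single i 1) y z =
      ∑ b, ∑ c, T j b c * (y b * z c) - ∑ b, ∑ c, T i b c * (y b * z c) := by
  simp [tripleSum, sub_mul, mul_sub, sum_sub_distrib, Pi.single_apply, ite_mul, mul_ite]

lemma tripleSum_single_sub_single_twice (h12 : ∀ a b c, T a b c = T b a c)
    (hdiag : ∀ a c, T a a c = 0) (i j : ι) (x : ι → ℝ) :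
    tripleSum T (Pi.single j 1 - Pi.single i 1) (Pi.single j 1 - Pi.single i 1) x =
      -2 * ∑ c, x c * T i j c := by
  simp [tripleSum, sub_mul, mul_sub, sum_sub_distrib, Pi.single_apply, ite_mul, mul_ite,
    hdiag, h12 j i]
  simp only [mul_comm (x _)]
  ring

lemma tripleSum_single_sub_single_thrice (h12 : ∀ a b c, T a b c = T b a c)
    (h23 : ∀ a b c, T a b c = T a c b) (hdiag : ∀ a c, T a a c = 0) (i j : ι) :
    tripleSum T (Pi.single j 1 - Pi.single i 1) (Pi.single j 1 - Pi.single i 1)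
      (Pi.single j 1 - Pi.single i 1) = 0 := by
  have hdiag13 : ∀ a b, T a b a = 0 := fun a b => by rw [h23, hdiag]
  have hdiag23 : ∀ a b, T a b b = 0 := fun a b => by rw [h12, hdiag13]
  simp [tripleSum, mul_sub, sum_sub_distrib, Pi.single_apply, mul_ite, hdiag, hdiag13, hdiag23]

lemma tripleSum_diag_add_smul_single_sub_single (h12 : ∀ a b c, T a b c = T b a c)
    (h23 : ∀ a b c, T a b c = T a c b) (hdiag : ∀ a c, T a a c = 0)
    (x : ι → ℝ) (i j : ι) (t : ℝ) :
    tripleSum T (x + t • (Pi.single j 1 - Pi.single i 1)) (x + t • (Pi.single j 1 - Pi.single i 1))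
        (x + t • (Pi.single j 1 - Pi.single i 1)) - tripleSum T x x x =
      t * (3 * ∑ b, ∑ c, T j b c * (x b * x c) - 3 * ∑ b, ∑ c, T i b c * (x b * x c)) -
        6 * t ^ 2 * ∑ c, x c * T i j c := by
  rw [tripleSum_diag_add_smul h12 h23, tripleSum_single_sub_single_left,
    tripleSum_single_sub_single_twice h12 hdiag, tripleSum_single_sub_single_thrice h12 h23 hdiag]
  ring

end TripleSum

lemma triArea_comm12 (A B C : ℝ × ℝ) : triArea A B C = triArea B A C := by
  rw [triArea, triArea, ← abs_neg]
  congr 2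
  simp only [cross2, Prod.fst_sub, Prod.snd_sub]
  ring

lemma triArea_comm23 (A B C : ℝ × ℝ) : triArea A B C = triArea A C B := by
  rw [triArea, triArea, ← abs_neg]
  congr 2
  simp only [cross2]
  ring

lemma triArea_self_left (A C : ℝ × ℝ) : triArea A A C = 0 := by
  simp [triArea, cross2]

open Fin.CommRing in
lemma Fin.add_one_ne_self_of_two_le {n : ℕ} [NeZero n] (hn : 2 ≤ n) (i : Fin n) : i + 1 ≠ i :=
  have : Nontrivial (Fin n) := Fin.nontrivial_iff_two_le.mpr hn
  succ_ne_self i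

theorem stmt13_general {n : ℕ} [NeZero n] (hn : 3 ≤ n) (c : ℝ)
    (P : Fin n → ℝ × ℝ)
    (lamM : Fin n → ℝ)
    (hcrit : ∀ i j : Fin n,
      3 * c * ∑ j', ∑ k', triArea (P i) (P j') (P k') * (lamM j' * lamM k') =
      3 * c * ∑ j', ∑ k', triArea (P j) (P j') (P k') * (lamM j' * lamM k'))
    (i : Fin n) (lamD : Fin n → ℝ)
    (hD : lamD = Function.update (Function.update lamM i 0) (i + 1)
      (lamM i + lamM (i + 1))) :
    aForm c P lamD - aForm c P lamM =
      -c * 6 * (lamM i) ^ 2 * ∑ j, lamM j * triArea (P i) (P (i + 1)) (P j) := by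
  have hne : i + 1 ≠ i := Fin.add_one_ne_self_of_two_le (by omega) i
  have hlamD : lamD = lamM + lamM i • (Pi.single (i + 1) 1 - Pi.single i 1) := by
    subst hD
    ext j
    simp only [Function.update_apply, Pi.add_apply, Pi.smul_apply, Pi.sub_apply,
      Pi.single_apply, smul_eq_mul]
    split_ifs <;> simp_all [add_comm]
  have shift := tripleSum_diag_add_smul_single_sub_single
    (T := fun a b c => triArea (P a) (P b) (P c)) (fun _ _ _ => triArea_comm12 _ _ _)
    (fun _ _ _ => triArea_comm23 _ _ _) (fun _ _ => triArea_self_left _ _) lamM i (i + 1) (lamM i)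
  rw [hlamD]
  change c * tripleSum _ _ _ _ - c * tripleSum _ _ _ _ = _
  linear_combination c * shift + lamM i * hcrit (i + 1) i

/-- Let `a(λ) = c Σ area(P_i P_j P_k) λ_i λ_j λ_k` (`c > 0`, `P` the
vertices of a convex polygon in cyclic order) on the simplex, `λ^M` a point where all
partial derivatives `∂a/∂λ_i = 3c Σ_{j,k} area(P_i P_j P_k) λ_j λ_k` are equal (local
maximum), and fix `i`.  Setting `λ^D_i = 0`, `λ^D_{i+1} = λ^M_i + λ^M_{i+1}` and
`λ^D_j = λ^M_j` otherwise, one has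
`a(λ^D) − a(λ^M) = −c·3!·(λ^M_i)² Σ_j λ^M_j area(P_i P_{i+1} P_j)`. -/
theorem stmt13 {n : ℕ} [NeZero n] (hn : 3 ≤ n) (c : ℝ) (hc : 0 < c)
    (P : Fin n → ℝ × ℝ)
    (hconv : ∀ i j : Fin n, 0 ≤ cross2 (P (i + 1) - P i) (P j - P i))
    (lamM : Fin n → ℝ) (hnn : ∀ i, 0 ≤ lamM i) (hsum : ∑ i, lamM i = 1)
    (hcrit : ∀ i j : Fin n,
      3 * c * ∑ j', ∑ k', triArea (P i) (P j') (P k') * (lamM j' * lamM k') =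
      3 * c * ∑ j', ∑ k', triArea (P j) (P j') (P k') * (lamM j' * lamM k'))
    (i : Fin n) (lamD : Fin n → ℝ)
    (hD : lamD = Function.update (Function.update lamM i 0) (i + 1)
      (lamM i + lamM (i + 1))) :
    aForm c P lamD - aForm c P lamM =
      -c * 6 * (lamM i) ^ 2 * ∑ j, lamM j * triArea (P i) (P (i + 1)) (P j) :=
  stmt13_general hn c P lamM hcrit i lamD hD
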